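/- arXiv:math/9804104 — 3 statements merged into one kernel-verified Lean document; each statement's English description precedes it below -/
import Mathlib

section
/- Let V be a multiplicative unitary on a finite-dimensional Hilbert space H and let ξ ∈ H be a unit vector. If ψ = ω_{ξ,ξ} denotes the vector state, then the set H^ξ = {η ∈ H : V(ξ⊗η) = ξ⊗η} equals {η ∈ H : L(ψ)η = η}, where L(ψ) = (ψ⊗id)(V). -/
open scoped InnerProductSpace ComplexOrder

noncomputable section

namespace MU

variable {ι : Type*} [Fintype ι] [DecidableEq ι]

/-- The elementary tensor `f ⊗ g` of two vectors, in the model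
`H ⊗ H = EuclideanSpace ℂ (ι × ι)`. -/
def tens (f g : EuclideanSpace ℂ ι) : EuclideanSpace ℂ (ι × ι) :=
  WithLp.toLp 2 (fun p => f p.1 * g p.2)

/-- `g ↦ f ⊗ g` as a linear map. -/
def tensL (f : EuclideanSpace ℂ ι) :
    EuclideanSpace ℂ ι →ₗ[ℂ] EuclideanSpace ℂ (ι × ι) where
  toFun g := tens f g
  map_add' x y := by
    ext p; simp only [tens, PiLp.add_apply]; ring
  map_smul' c x := by
    ext p; simp only [tens, PiLp.smul_apply, smul_eq_mul, RingHom.id_apply]; ring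

/-- `f ↦ f ⊗ g` as a linear map. -/
def tensR (g : EuclideanSpace ℂ ι) :
    EuclideanSpace ℂ ι →ₗ[ℂ] EuclideanSpace ℂ (ι × ι) where
  toFun f := tens f g
  map_add' x y := by
    ext p; simp only [tens, PiLp.add_apply]; ring
  map_smul' c x := by
    ext p; simp only [tens, PiLp.smul_apply, smul_eq_mul, RingHom.id_apply]; ring

/-- Action of a matrix on a Euclidean space vector. -/
def appM {κ : Type*} [Fintype κ] (M : Matrix κ κ ℂ) (v : EuclideanSpace ℂ κ) :
    EuclideanSpace ℂ κ :=
  WithLp.toLp 2 (fun i => ∑ j, M i j * v j)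

/-- Action of a matrix as a linear map on the Euclidean space. -/
def mact {κ : Type*} [Fintype κ] (M : Matrix κ κ ℂ) :
    EuclideanSpace ℂ κ →ₗ[ℂ] EuclideanSpace ℂ κ where
  toFun := appM M
  map_add' x y := by
    ext i; simp only [appM, PiLp.add_apply, mul_add, Finset.sum_add_distrib]
  map_smul' c x := by
    ext i; simp only [appM, PiLp.smul_apply, smul_eq_mul, RingHom.id_apply, Finset.mul_sum]
    refine Finset.sum_congr rfl fun j _ => ?_
    ring

/-- The leg `V₁₂` on `H ⊗ H ⊗ H`. -/
def leg12 (V : Matrix (ι × ι) (ι × ι) ℂ) : Matrix (ι × ι × ι) (ι × ι × ι) ℂ :=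
  fun p q => V (p.1, p.2.1) (q.1, q.2.1) * (if p.2.2 = q.2.2 then 1 else 0)

/-- The leg `V₁₃` on `H ⊗ H ⊗ H`. -/
def leg13 (V : Matrix (ι × ι) (ι × ι) ℂ) : Matrix (ι × ι × ι) (ι × ι × ι) ℂ :=
  fun p q => V (p.1, p.2.2) (q.1, q.2.2) * (if p.2.1 = q.2.1 then 1 else 0)

/-- The leg `V₂₃` on `H ⊗ H ⊗ H`. -/
def leg23 (V : Matrix (ι × ι) (ι × ι) ℂ) : Matrix (ι × ι × ι) (ι × ι × ι) ℂ :=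
  fun p q => V (p.2.1, p.2.2) (q.2.1, q.2.2) * (if p.1 = q.1 then 1 else 0)

/-- The pentagon equation `V₁₂ V₁₃ V₂₃ = V₂₃ V₁₂`. -/
def Pentagon (V : Matrix (ι × ι) (ι × ι) ℂ) : Prop :=
  leg12 V * leg13 V * leg23 V = leg23 V * leg12 V

/-- `V` is a multiplicative unitary: a unitary satisfying the pentagon equation. -/
def IsMU (V : Matrix (ι × ι) (ι × ι) ℂ) : Prop :=
  V * V.conjTranspose = 1 ∧ V.conjTranspose * V = 1 ∧ Pentagon V

/-- `ξ` is a fixed vector for `V`. -/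
def Fixed (V : Matrix (ι × ι) (ι × ι) ℂ) (ξ : EuclideanSpace ℂ ι) : Prop :=
  ∀ η, mact V (tens ξ η) = tens ξ η

/-- `ξ` is a cofixed vector for `V`. -/
def Cofixed (V : Matrix (ι × ι) (ι × ι) ℂ) (ξ : EuclideanSpace ℂ ι) : Prop :=
  ∀ η, mact V (tens η ξ) = tens η ξ

/-- `V` has multiplicity 1, with fixed unit vector `e` and cofixed unit vector `eHat`. -/
def Mult1 (V : Matrix (ι × ι) (ι × ι) ℂ) (e eHat : EuclideanSpace ℂ ι) : Prop :=
  ‖e‖ = 1 ∧ ‖eHat‖ = 1 ∧ Fixed V e ∧ Cofixed V eHat ∧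
    (∀ ξ, Fixed V ξ → ∃ c : ℂ, ξ = c • e) ∧
    (∀ ξ, Cofixed V ξ → ∃ c : ℂ, ξ = c • eHat)

/-- A pre-subgroup of `V` (with fixed vector `e`): a unit vector `f` with
`⟨f,e⟩ > 0` and `V(f⊗f) = f⊗f`. -/
def IsPreSubgroup (V : Matrix (ι × ι) (ι × ι) ℂ) (e f : EuclideanSpace ℂ ι) : Prop :=
  ‖f‖ = 1 ∧ 0 < ⟪f, e⟫_ℂ ∧ mact V (tens f f) = tens f f

/-- The subspace `H^f = {η : V(f⊗η) = f⊗η}`. -/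
def subUp (V : Matrix (ι × ι) (ι × ι) ℂ) (f : EuclideanSpace ℂ ι) :
    Submodule ℂ (EuclideanSpace ℂ ι) :=
  LinearMap.ker ((mact V).comp (tensL f) - tensL f)

/-- The subspace `H_f = {η : V(η⊗f) = η⊗f}`. -/
def subDown (V : Matrix (ι × ι) (ι × ι) ℂ) (f : EuclideanSpace ℂ ι) :
    Submodule ℂ (EuclideanSpace ℂ ι) :=
  LinearMap.ker ((mact V).comp (tensR f) - tensR f)

/-- The slice `L(ω_{ξ,η}) = (ω_{ξ,η} ⊗ id)(V)`. -/
def Lslice (V : Matrix (ι × ι) (ι × ι) ℂ) (ξ η : EuclideanSpace ℂ ι) : Matrix ι ι ℂ :=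
  fun a b => ∑ x, ∑ y, (starRingEnd ℂ) (ξ x) * η y * V (x, a) (y, b)

/-- The slice `ρ(ω_{ξ,η}) = (id ⊗ ω_{ξ,η})(V)`. -/
def Rslice (V : Matrix (ι × ι) (ι × ι) ℂ) (ξ η : EuclideanSpace ℂ ι) : Matrix ι ι ℂ :=
  fun a b => ∑ x, ∑ y, (starRingEnd ℂ) (ξ x) * η y * V (a, x) (b, y)

/-- The slice `L(ω) = (ω ⊗ id)(V)` of a general linear functional `ω` on `L(H)`. -/
def LslF (V : Matrix (ι × ι) (ι × ι) ℂ) (ω : Matrix ι ι ℂ →ₗ[ℂ] ℂ) : Matrix ι ι ℂ :=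
  fun a b => ω (fun x y => V (x, a) (y, b))

/-- A state on `L(H)`: a unital positive linear functional. -/
def IsState (ω : Matrix ι ι ℂ →ₗ[ℂ] ℂ) : Prop :=
  ω 1 = 1 ∧ ∀ M : Matrix ι ι ℂ, M.PosSemidef → ∃ r : ℝ, 0 ≤ r ∧ ω M = r


/-!
Write `S η = ξ ⊗ η`; since `‖ξ‖ = 1`, `S` is an isometry, and `L(ψ) = S* V S` because
`⟪ζ, L(ψ) η⟫ = ⟪ξ ⊗ ζ, V (ξ ⊗ η)⟫`. Hence `V S η = S η` gives `L(ψ) η = η`. Conversely,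
`L(ψ) η = η` gives `⟪S η, V S η⟫ = ‖S η‖²`, and as `V` is isometric this is the equality case
of Cauchy–Schwarz, forcing `V S η = S η`.
-/

section

variable {κ : Type*} [Fintype κ]

lemma appM_eq_toEuclideanCLM [DecidableEq κ] (M : Matrix κ κ ℂ) (v : EuclideanSpace ℂ κ) :
    appM M v = Matrix.toEuclideanCLM (𝕜 := ℂ) M v :=
  rfl

lemma norm_appM_of_conjTranspose_mul_self_eq_one [DecidableEq κ] {M : Matrix κ κ ℂ}
    (hM : M.conjTranspose * M = 1) (v : EuclideanSpace ℂ κ) : ‖appM M v‖ = ‖v‖ := by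
  have hCLM : ContinuousLinearMap.adjoint (Matrix.toEuclideanCLM (𝕜 := ℂ) M) ∘L
      Matrix.toEuclideanCLM (𝕜 := ℂ) M = 1 := by
    rw [← ContinuousLinearMap.star_eq_adjoint, ← map_star, ← ContinuousLinearMap.mul_def,
      ← map_mul, Matrix.star_eq_conjTranspose, hM, map_one]
  rw [appM_eq_toEuclideanCLM]
  exact (ContinuousLinearMap.norm_map_iff_adjoint_comp_self _).mpr hCLM v

lemma inner_tens_tens (a b c d : EuclideanSpace ℂ κ) :
    ⟪tens a b, tens c d⟫_ℂ = ⟪a, c⟫_ℂ * ⟪b, d⟫_ℂ := by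
  simp only [tens, PiLp.inner_apply, RCLike.inner_apply, Fintype.sum_prod_type, Finset.sum_mul_sum,
    map_mul]
  exact Finset.sum_congr rfl fun _ _ => Finset.sum_congr rfl fun _ _ => by ring

lemma norm_tens (a b : EuclideanSpace ℂ κ) : ‖tens a b‖ = ‖a‖ * ‖b‖ := by
  have h := inner_tens_tens a b a b
  simp only [inner_self_eq_norm_sq_to_K] at h
  have hsq : ‖tens a b‖ ^ 2 = (‖a‖ * ‖b‖) ^ 2 := by
    rw [mul_pow]
    exact_mod_cast h
  exact (pow_left_inj₀ (norm_nonneg _) (by positivity) two_ne_zero).mp hsq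

lemma inner_appM_Lslice (V : Matrix (κ × κ) (κ × κ) ℂ) (ξ ξ' ζ η : EuclideanSpace ℂ κ) :
    ⟪ζ, appM (Lslice V ξ ξ') η⟫_ℂ = ⟪tens ξ ζ, appM V (tens ξ' η)⟫_ℂ := by
  simp only [appM, Lslice, tens, PiLp.inner_apply, PiLp.toLp_apply, RCLike.inner_apply,
    Fintype.sum_prod_type, Finset.sum_mul, map_mul]
  refine (Finset.sum_congr rfl fun a _ => Finset.sum_comm).trans ?_
  rw [Finset.sum_comm]
  refine Finset.sum_congr rfl fun x _ => Finset.sum_congr rfl fun a _ => ?_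
  rw [Finset.sum_comm]
  exact Finset.sum_congr rfl fun y _ => Finset.sum_congr rfl fun b _ => by ring

end

theorem subUp_eq_fixedPoints_Lslice_general {ι : Type*} [Fintype ι] [DecidableEq ι]
    (V : Matrix (ι × ι) (ι × ι) ℂ) (hV : IsMU V)
    (ξ : EuclideanSpace ℂ ι) (hξ : ‖ξ‖ = 1) :
    {η : EuclideanSpace ℂ ι | mact V (tens ξ η) = tens ξ η} =
      {η : EuclideanSpace ℂ ι | appM (Lslice V ξ ξ) η = η} := by
  ext η
  change appM V (tens ξ η) = tens ξ η ↔ appM (Lslice V ξ ξ) η = η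
  constructor
  · intro hfix
    refine ext_inner_left ℂ fun ζ => ?_
    rw [inner_appM_Lslice, hfix, inner_tens_tens, inner_self_eq_norm_sq_to_K, hξ]
    simp
  · intro hfix
    have hnorm : ‖tens ξ η‖ = ‖η‖ := by rw [norm_tens, hξ, one_mul]
    have hcs : ⟪tens ξ η, appM V (tens ξ η)⟫_ℂ = (‖tens ξ η‖ : ℂ) ^ 2 := by
      rw [← inner_appM_Lslice, hfix, hnorm, inner_self_eq_norm_sq_to_K]
      rfl
    refine eq_of_norm_le_re_inner_eq_norm_sq (𝕜 := ℂ)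
      (norm_appM_of_conjTranspose_mul_self_eq_one hV.2.1 _).le ?_
    rw [← inner_conj_symm, RCLike.conj_re, hcs]
    norm_cast

/-- for a unit vector `ξ`, the set `H^ξ` coincides with the
fixed-point set of `L(ω_ξξ)`. -/
theorem subUp_eq_fixedPoints_Lslice {ι : Type*} [Fintype ι] [DecidableEq ι] [Nonempty ι]
    (V : Matrix (ι × ι) (ι × ι) ℂ) (hV : IsMU V)
    (ξ : EuclideanSpace ℂ ι) (hξ : ‖ξ‖ = 1) :
    {η : EuclideanSpace ℂ ι | mact V (tens ξ η) = tens ξ η} =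
      {η : EuclideanSpace ℂ ι | appM (Lslice V ξ ξ) η = η} :=
  subUp_eq_fixedPoints_Lslice_general V hV ξ hξ

end MU
end
end

section
/- Let H be a finite-dimensional Hilbert space and A a unital *-subalgebra of L(H). The following are equivalent: (i) there exists a positive integer k such that H^k is a free A-module; (ii) dim(A)·dim(A') = (dim H)², where A' is the commutant of A. In this case, H itself is a free A-module if and only if dim(A) divides dim(H). -/
/-!
For modules over a finite-dimensional semisimple `K`-algebra `R` put `ν(M, N) = dim_K Hom_R(M, N)`
(`homDim`). It is additive in both arguments, and `ν(S, N) = ν(N, S)` for simple `S` (Schur), so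
`ν(P, P) + ν(Q, Q) - 2 ν(P, Q)` behaves like a squared distance between `P` and `Q`: splitting off a
common simple summand along a nonzero map `P → Q` shows by induction that it vanishes only if
`P ≅ Q`. For `P = R^m` and `Q = H^k`, with `a = dim R`, `n = dim H` and `b = ν(H, H)`, it equals
`m²a + k²b - 2mkn`, and `a (m²a + k²b - 2mkn) = (ma - kn)² + k²(ab - n²)`, while an isomorphism
forces `ma = kn` by counting dimensions.

For a unital *-subalgebra `A ⊆ L(H)` the commutant `A'` is `End_A(H)`, and `A` is semisimple: it
embeds in `H^ι` through its columns, and orthogonal complements of `A`-invariant subspaces of `H`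
are `A`-invariant.
-/

open scoped InnerProductSpace ComplexOrder

noncomputable section

namespace MU

variable {ι : Type*} [Fintype ι] [DecidableEq ι]

/-- `H^k` is a free `A`-module: there is an `A`-basis, i.e. a family of vectors
`v : Fin m → (Fin k → H)` such that `(aᵢ) ↦ ∑ aᵢ • vᵢ` is a bijection from
`A^m` onto `H^k`. -/
def HFreePow {ι : Type*} [Fintype ι] [DecidableEq ι]
    (A : StarSubalgebra ℂ (Matrix ι ι ℂ)) (k : ℕ) : Prop :=
  ∃ (m : ℕ) (v : Fin m → Fin k → EuclideanSpace ℂ ι),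
    Function.Bijective (fun a : Fin m → A =>
      fun j : Fin k => ∑ i, appM ((a i : Matrix ι ι ℂ)) (v i j))

/-- The commutant of a star-subalgebra of `L(H)`, as a subspace of `L(H)`. -/
def commutant {ι : Type*} [Fintype ι] [DecidableEq ι]
    (A : StarSubalgebra ℂ (Matrix ι ι ℂ)) : Submodule ℂ (Matrix ι ι ℂ) where
  carrier := {M | ∀ a ∈ A, M * a = a * M}
  add_mem' := by intro x y hx hy a ha; rw [add_mul, mul_add, hx a ha, hy a ha]
  zero_mem' := by intro a ha; rw [zero_mul, mul_zero]
  smul_mem' := by intro c x hx a ha; rw [smul_mul_assoc, mul_smul_comm, hx a ha]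

end MU

open Module

section Split

variable {R : Type*} [Ring R] {M N : Type*} [AddCommGroup M] [Module R M] [AddCommGroup N]
  [Module R N]

theorem exists_isSimpleModule_disjoint_ker [IsSemisimpleModule R M] (f : M →ₗ[R] N) (hf : f ≠ 0) :
    ∃ S : Submodule R M, IsSimpleModule R S ∧ Disjoint S (LinearMap.ker f) := by
  obtain ⟨S, hS, hSf⟩ : ∃ S : Submodule R M, IsSimpleModule R S ∧ ¬ S ≤ LinearMap.ker f := by
    by_contra! h
    refine hf (LinearMap.ker_eq_top.mp (top_le_iff.mp ?_))
    rw [← IsSemisimpleModule.sSup_simples_eq_top R M]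
    exact sSup_le h
  exact ⟨S, hS, IsAtom.not_le_iff_disjoint (isSimpleModule_iff_isAtom.mp hS) |>.mp hSf⟩

theorem exists_isSimpleModule_prod_linearEquiv [IsSemisimpleModule R M] [IsSemisimpleModule R N]
    (f : M →ₗ[R] N) (hf : f ≠ 0) :
    ∃ (S C : Submodule R M) (D : Submodule R N), IsSimpleModule R S ∧
      Nonempty ((S × C) ≃ₗ[R] M) ∧ Nonempty ((S × D) ≃ₗ[R] N) := by
  obtain ⟨S, hS, hker⟩ := exists_isSimpleModule_disjoint_ker f hf
  obtain ⟨C, hC⟩ := exists_isCompl S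
  have hinj : Function.Injective (f ∘ₗ S.subtype) := by
    rw [← LinearMap.ker_eq_bot, LinearMap.ker_comp, ← Submodule.disjoint_iff_comap_eq_bot]
    exact hker
  obtain ⟨D, hD⟩ := exists_isCompl (LinearMap.range (f ∘ₗ S.subtype))
  exact ⟨S, C, D, hS, ⟨S.prodEquivOfIsCompl C hC⟩,
    ⟨((LinearEquiv.ofInjective _ hinj).prodCongr (.refl R D)).trans
      (Submodule.prodEquivOfIsCompl _ D hD)⟩⟩

end Split

section HomDim

variable (K R : Type*) [Field K] [Ring R] [Algebra K R]

def homDim (M N : Type*) [AddCommGroup M] [Module R M] [AddCommGroup N] [Module R N]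
    [Module K N] [IsScalarTower K R N] : ℕ :=
  finrank K (M →ₗ[R] N)

variable {K R} {M M' N N' : Type*}
  [AddCommGroup M] [Module R M] [Module K M] [IsScalarTower K R M]
  [AddCommGroup M'] [Module R M'] [Module K M'] [IsScalarTower K R M']
  [AddCommGroup N] [Module R N] [Module K N] [IsScalarTower K R N]
  [AddCommGroup N'] [Module R N'] [Module K N'] [IsScalarTower K R N']

instance [FiniteDimensional K M] [FiniteDimensional K N] : FiniteDimensional K (M →ₗ[R] N) :=
  .of_injective (LinearMap.restrictScalarsₗ K R M N K) (LinearMap.restrictScalars_injective K)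

instance [FiniteDimensional K M] (S : Submodule R M) : FiniteDimensional K S :=
  .of_injective (S.subtype.restrictScalars K) S.injective_subtype

variable (K) in
def LinearEquiv.homCongr (e₁ : M ≃ₗ[R] M') (e₂ : N ≃ₗ[R] N') :
    (M →ₗ[R] N) ≃ₗ[K] (M' →ₗ[R] N') where
  __ := e₁.arrowCongrAddEquiv e₂
  map_smul' c f := by ext; exact e₂.toLinearMap.map_smul_of_tower c _

omit [Module K M] [IsScalarTower K R M] [Module K M'] [IsScalarTower K R M'] in
theorem homDim_congr (e₁ : M ≃ₗ[R] M') (e₂ : N ≃ₗ[R] N') :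
    homDim K R M N = homDim K R M' N' :=
  (e₁.homCongr K e₂).finrank_eq

omit [Module K M] [IsScalarTower K R M] in
theorem subsingleton_of_homDim_self_eq_zero [FiniteDimensional K N] (h : homDim K R N N = 0) :
    Subsingleton N := by
  rw [homDim, finrank_zero_iff] at h
  refine subsingleton_of_forall_eq 0 fun x => ?_
  simpa using LinearMap.congr_fun (Subsingleton.elim (LinearMap.id : N →ₗ[R] N) 0) x

theorem homDim_prod_left [FiniteDimensional K M] [FiniteDimensional K M'] [FiniteDimensional K N] :
    homDim K R (M × M') N = homDim K R M N + homDim K R M' N := by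
  rw [homDim, ← (LinearMap.coprodEquiv K).finrank_eq, finrank_prod]; rfl

theorem homDim_prod_right [FiniteDimensional K M] [FiniteDimensional K N] [FiniteDimensional K N'] :
    homDim K R M (N × N') = homDim K R M N + homDim K R M N' := by
  rw [homDim, ← (LinearMap.prodEquiv K).finrank_eq, finrank_prod]; rfl

section Pi

variable {ι : Type*} [Fintype ι]

theorem homDim_pi_left [DecidableEq ι] (M : ι → Type*) [∀ i, AddCommGroup (M i)]
    [∀ i, Module R (M i)] [∀ i, Module K (M i)] [∀ i, IsScalarTower K R (M i)]
    [∀ i, FiniteDimensional K (M i)] [FiniteDimensional K N] :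
    homDim K R (∀ i, M i) N = ∑ i, homDim K R (M i) N := by
  rw [homDim, ← (LinearMap.lsum R M K).finrank_eq, finrank_pi_fintype]; rfl

variable (K) in
def LinearMap.piEquiv (N : ι → Type*) [∀ i, AddCommGroup (N i)]
    [∀ i, Module R (N i)] [∀ i, Module K (N i)] [∀ i, IsScalarTower K R (N i)] :
    (∀ i, M →ₗ[R] N i) ≃ₗ[K] (M →ₗ[R] ∀ i, N i) where
  toFun := LinearMap.pi
  invFun f i := LinearMap.proj i ∘ₗ f
  map_add' _ _ := rfl
  map_smul' _ _ := rfl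

theorem homDim_pi_right (N : ι → Type*) [∀ i, AddCommGroup (N i)]
    [∀ i, Module R (N i)] [∀ i, Module K (N i)] [∀ i, IsScalarTower K R (N i)]
    [∀ i, FiniteDimensional K (N i)] [FiniteDimensional K M] :
    homDim K R M (∀ i, N i) = ∑ i, homDim K R M (N i) := by
  rw [homDim, ← (LinearMap.piEquiv K N).finrank_eq, finrank_pi_fintype]; rfl

end Pi

theorem homDim_fin_fun_left [FiniteDimensional K M] [FiniteDimensional K N] (m : ℕ) :
    homDim K R (Fin m → M) N = m * homDim K R M N := by
  simp [homDim_pi_left]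

theorem homDim_fin_fun_right [FiniteDimensional K M] [FiniteDimensional K N] (k : ℕ) :
    homDim K R M (Fin k → N) = k * homDim K R M N := by
  simp [homDim_pi_right]

omit [Module K M] [IsScalarTower K R M] in
theorem homDim_eq_zero_of_isEmpty_linearEquiv [IsSimpleModule R M] [IsSimpleModule R N]
    (h : IsEmpty (M ≃ₗ[R] N)) : homDim K R M N = 0 := by
  have : Subsingleton (M →ₗ[R] N) := ⟨fun f g => by
    rw [f.bijective_or_eq_zero.resolve_left fun hf => h.false (.ofBijective f hf),
      g.bijective_or_eq_zero.resolve_left fun hg => h.false (.ofBijective g hg)]⟩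
  exact finrank_zero_of_subsingleton

theorem homDim_comm_of_isSimpleModule [IsSimpleModule R M] [IsSimpleModule R N] :
    homDim K R M N = homDim K R N M := by
  by_cases h : Nonempty (M ≃ₗ[R] N)
  · obtain ⟨e⟩ := h
    exact (homDim_congr e (.refl R N)).trans (homDim_congr (.refl R N) e).symm
  · rw [homDim_eq_zero_of_isEmpty_linearEquiv (not_nonempty_iff.mp h),
      homDim_eq_zero_of_isEmpty_linearEquiv ⟨fun e => h ⟨e.symm⟩⟩]

theorem homDim_comm_of_isSimpleModule_left [IsSimpleModule R M] [IsSemisimpleModule R N]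
    [FiniteDimensional K M] [FiniteDimensional K N] :
    homDim K R M N = homDim K R N M := by
  have : Module.Finite R N := .of_restrictScalars_finite K R N
  obtain ⟨n, S, e, hS⟩ := IsSemisimpleModule.exists_linearEquiv_fin_dfinsupp R N
  let e' := e.trans (DFinsupp.linearEquivFunOnFintype (R := R))
  rw [homDim_congr (.refl R M) e', homDim_congr e' (.refl R M), homDim_pi_left, homDim_pi_right]
  exact Finset.sum_congr rfl fun i _ => homDim_comm_of_isSimpleModule

end HomDim

section Classification

variable {K R : Type*} [Field K] [Ring R] [Algebra K R]

theorem nonempty_linearEquiv_of_homDim_add_homDim {P Q : Type*}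
    [AddCommGroup P] [Module R P] [Module K P] [IsScalarTower K R P]
    [AddCommGroup Q] [Module R Q] [Module K Q] [IsScalarTower K R Q]
    [IsSemisimpleModule R P] [IsSemisimpleModule R Q] [FiniteDimensional K P]
    [FiniteDimensional K Q] (h : homDim K R P P + homDim K R Q Q = 2 * homDim K R P Q) :
    Nonempty (P ≃ₗ[R] Q) := by
  induction hn : finrank K P + finrank K Q using Nat.strong_induction_on generalizing P Q with
  | _ n ih =>
  by_cases h0 : homDim K R P Q = 0
  · rw [h0, mul_zero, Nat.add_eq_zero_iff] at h
    have := subsingleton_of_homDim_self_eq_zero h.1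
    have := subsingleton_of_homDim_self_eq_zero h.2
    exact ⟨.ofSubsingleton P Q⟩
  have : Nontrivial (P →ₗ[R] Q) := Module.nontrivial_of_finrank_pos (Nat.pos_of_ne_zero h0)
  obtain ⟨f, hf⟩ := exists_ne (0 : P →ₗ[R] Q)
  obtain ⟨S, C, D, hS, ⟨eP⟩, ⟨eQ⟩⟩ := exists_isSimpleModule_prod_linearEquiv f hf
  have hCD : homDim K R C C + homDim K R D D = 2 * homDim K R C D := by
    have hPP := homDim_congr (K := K) eP.symm eP.symm
    have hQQ := homDim_congr (K := K) eQ.symm eQ.symm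
    have hPQ := homDim_congr (K := K) eP.symm eQ.symm
    have hCS := homDim_comm_of_isSimpleModule_left (K := K) (R := R) (M := S) (N := C)
    have hDS := homDim_comm_of_isSimpleModule_left (K := K) (R := R) (M := S) (N := D)
    simp only [homDim_prod_left, homDim_prod_right] at hPP hQQ hPQ
    omega
  have hlt : finrank K C + finrank K D < n := by
    have hP := (eP.restrictScalars K).finrank_eq
    have hQ := (eQ.restrictScalars K).finrank_eq
    have := IsSimpleModule.nontrivial R S
    have : 0 < finrank K S := finrank_pos
    rw [finrank_prod] at hP hQ
    omega
  obtain ⟨e⟩ := ih _ hlt hCD rfl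
  exact ⟨eP.symm.trans (((LinearEquiv.refl R S).prodCongr e).trans eQ)⟩

end Classification

section FreePowers

variable {K R : Type*} [Field K] [Ring R] [Algebra K R] [IsSemisimpleRing R] [Nontrivial R]
  [FiniteDimensional K R] {N : Type*} [AddCommGroup N] [Module R N] [Module K N]
  [IsScalarTower K R N] [FiniteDimensional K N]

omit [IsSemisimpleRing R] [Nontrivial R] [FiniteDimensional K R] [FiniteDimensional K N] in
theorem homDim_ring_left : homDim K R R N = finrank K N :=
  (LinearMap.ringLmapEquivSelf R K N).finrank_eq

theorem exists_pos_linearEquiv_fin_fun_iff :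
    (∃ k, 0 < k ∧ ∃ m, Nonempty ((Fin m → R) ≃ₗ[R] (Fin k → N))) ↔
      finrank K R * homDim K R N N = finrank K N ^ 2 := by
  constructor
  · rintro ⟨k, hk, m, ⟨e⟩⟩
    have hdim : m * finrank K R = k * finrank K N := by
      simpa [finrank_pi_fintype] using (e.restrictScalars K).finrank_eq
    have hhom : k * (k * homDim K R N N) = k * (m * finrank K N) := by
      have := homDim_congr (K := K) e (.refl R (Fin k → N))
      simp only [homDim_fin_fun_left, homDim_fin_fun_right, homDim_ring_left] at this
      linarith
    have hkb := Nat.eq_of_mul_eq_mul_left hk hhom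
    rcases Nat.eq_zero_or_pos m with rfl | hm
    · have hn : finrank K N = 0 := by simpa [hk.ne'] using hdim.symm
      have hb : homDim K R N N = 0 := by simpa [hk.ne'] using hkb
      simp [hn, hb]
    · apply Nat.eq_of_mul_eq_mul_left (Nat.mul_pos hm hk)
      calc m * k * (finrank K R * homDim K R N N)
          = (m * finrank K R) * (k * homDim K R N N) := by ring
        _ = m * k * finrank K N ^ 2 := by rw [hdim, hkb]; ring
  · intro h
    refine ⟨finrank K R, finrank_pos, finrank K N,
      nonempty_linearEquiv_of_homDim_add_homDim (K := K) ?_⟩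
    simp only [homDim_fin_fun_left, homDim_fin_fun_right, homDim_ring_left]
    linear_combination (finrank K R) * h

theorem exists_linearEquiv_fin_fun_iff_dvd (h : finrank K R * homDim K R N N = finrank K N ^ 2)
    (k : ℕ) :
    (∃ m, Nonempty ((Fin m → R) ≃ₗ[R] (Fin k → N))) ↔ finrank K R ∣ k * finrank K N := by
  constructor
  · rintro ⟨m, ⟨e⟩⟩
    exact ⟨m, by simpa [finrank_pi_fintype, mul_comm] using (e.restrictScalars K).finrank_eq.symm⟩
  · rintro ⟨m, hm⟩
    refine ⟨m, nonempty_linearEquiv_of_homDim_add_homDim (K := K) ?_⟩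
    simp only [homDim_fin_fun_left, homDim_fin_fun_right, homDim_ring_left]
    apply Nat.eq_of_mul_eq_mul_left (finrank_pos : 0 < finrank K R)
    calc finrank K R * (m * (m * finrank K R) + k * (k * homDim K R N N))
        = (finrank K R * m) ^ 2 + k ^ 2 * (finrank K R * homDim K R N N) := by ring
      _ = 2 * (k * finrank K N) * (finrank K R * m) := by rw [h, ← hm]; ring
      _ = finrank K R * (2 * (k * (m * finrank K N))) := by ring

end FreePowers

namespace MU

variable {ι : Type*} [Fintype ι] [DecidableEq ι]

section StarSubalgebra

open Matrix

variable (A : StarSubalgebra ℂ (Matrix ι ι ℂ))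

instance : IsScalarTower ℂ A (ι → ℂ) := ⟨fun c a v => smul_assoc c (a : Matrix ι ι ℂ) v⟩

instance : FiniteDimensional ℂ A :=
  inferInstanceAs (FiniteDimensional ℂ (Subalgebra.toSubmodule A.toSubalgebra))

theorem smul_eq_toEuclideanLin (a : A) (v : EuclideanSpace ℂ ι) :
    a • v = toEuclideanLin (a : Matrix ι ι ℂ) v := rfl

instance : IsSemisimpleModule A (EuclideanSpace ℂ ι) where
  exists_isCompl p := by
    let q : Submodule A (EuclideanSpace ℂ ι) :=
      { (p.restrictScalars ℂ)ᗮ with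
        smul_mem' a v hv w hw := by
          rw [smul_eq_toEuclideanLin, ← LinearMap.adjoint_inner_left,
            ← toEuclideanLin_conjTranspose_eq_adjoint]
          exact hv _ (p.smul_mem (star a) hw) }
    exact ⟨q, (Submodule.isCompl_restrictScalars_iff ℂ).mp
      (Submodule.isCompl_orthogonal (K := p.restrictScalars ℂ))⟩

instance : IsSemisimpleRing A := by
  let f : A →ₗ[A] ι → EuclideanSpace ℂ ι :=
    LinearMap.pi fun j => LinearMap.toSpanSingleton A _ (EuclideanSpace.single j 1)
  refine IsSemisimpleModule.of_injective f fun a b hab => ?_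
  refine Subtype.ext <| toEuclideanLin.injective <|
    (EuclideanSpace.basisFun ι ℂ).toBasis.ext fun j => ?_
  simpa [f, smul_eq_toEuclideanLin] using congrFun hab j

theorem mem_commutant_iff (M : Matrix ι ι ℂ) :
    M ∈ commutant A ↔ ∀ (a : A) (v : EuclideanSpace ℂ ι),
      toEuclideanLin M (a • v) = a • toEuclideanLin M v := by
  simp only [smul_eq_toEuclideanLin]
  refine ⟨fun h a v => ?_, fun h a ha => toEuclideanLin.injective (LinearMap.ext fun v => ?_)⟩
  · simpa using congrArg (fun N => toEuclideanLin N v) (h a a.2)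
  · simpa using h ⟨a, ha⟩ v

def commutantEquiv :
    commutant A ≃ₗ[ℂ] (EuclideanSpace ℂ ι →ₗ[A] EuclideanSpace ℂ ι) where
  toFun M := { toEuclideanLin (M : Matrix ι ι ℂ) with map_smul' := (mem_commutant_iff A M).mp M.2 }
  invFun f := ⟨toEuclideanLin.symm (f.restrictScalars ℂ), (mem_commutant_iff A _).mpr (by simp)⟩
  map_add' M N := by ext; simp
  map_smul' c M := by ext; simp
  left_inv M := Subtype.ext (toEuclideanLin.symm_apply_eq.mpr (by ext; rfl))
  right_inv f := by ext; simp

theorem hFreePow_iff (k : ℕ) :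
    HFreePow A k ↔ ∃ m, Nonempty ((Fin m → A) ≃ₗ[A] (Fin k → EuclideanSpace ℂ ι)) := by
  have h (m : ℕ) (v : Fin m → Fin k → EuclideanSpace ℂ ι) :
      (fun a : Fin m → A => fun j => ∑ i, appM (a i : Matrix ι ι ℂ) (v i j)) =
        Fintype.linearCombination A v := by
    funext a j
    simp only [Fintype.linearCombination_apply, Finset.sum_apply, Pi.smul_apply]
    rfl
  simp only [HFreePow, h]
  refine ⟨fun ⟨m, v, hv⟩ => ⟨m, ⟨.ofBijective _ hv⟩⟩,
    fun ⟨m, ⟨e⟩⟩ => ⟨m, fun i => e (Pi.single i 1), ?_⟩⟩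
  convert e.bijective
  refine congrArg DFunLike.coe (LinearMap.pi_ext fun i x => ?_ : _ = e.toLinearMap)
  rw [Fintype.linearCombination_apply_single, LinearEquiv.coe_coe, ← map_smul, ← Pi.single_smul,
    smul_eq_mul, mul_one]

end StarSubalgebra

/-- `H^k` is free over `A` for some `k ≥ 1` iff
`dim A · dim A' = (dim H)²`; and in this case `H` itself is free over `A` iff
`dim A` divides `dim H`. -/
theorem free_module_iff_dim_commutant {ι : Type*} [Fintype ι] [DecidableEq ι] [Nonempty ι]
    (A : StarSubalgebra ℂ (Matrix ι ι ℂ)) :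
    ((∃ k : ℕ, 0 < k ∧ HFreePow A k) ↔
      Module.finrank ℂ ↥A * Module.finrank ℂ ↥(commutant A) = (Fintype.card ι) ^ 2) ∧
    ((∃ k : ℕ, 0 < k ∧ HFreePow A k) →
      (HFreePow A 1 ↔ Module.finrank ℂ ↥A ∣ Fintype.card ι)) := by
  have hcomm : finrank ℂ (commutant A) = homDim ℂ A (EuclideanSpace ℂ ι) (EuclideanSpace ℂ ι) :=
    (commutantEquiv A).finrank_eq
  simp only [hFreePow_iff, hcomm, ← finrank_euclideanSpace (𝕜 := ℂ) (ι := ι)]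
  refine ⟨exists_pos_linearEquiv_fin_fun_iff (K := ℂ), fun h => ?_⟩
  rw [exists_linearEquiv_fin_fun_iff_dvd ((exists_pos_linearEquiv_fin_fun_iff (K := ℂ)).mp h),
    one_mul]

end MU
end
end

section
/- Let H be a finite-dimensional Hilbert space of dimension n with normalized trace τ, and A, B unital *-subalgebras of L(H) with τ(ab)=τ(a)τ(b) for all a∈A, b∈B. If f̂ is a unit vector with θ_{f̂,f̂} ∈ A and dim B = n, then θ_{f̂,f̂} is central in A. -/
open scoped InnerProductSpace ComplexOrder

noncomputable section

namespace MU

variable {ι : Type*} [Fintype ι] [DecidableEq ι]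

/-- The normalized trace on `L(H)`. -/
def ntr {ι : Type*} [Fintype ι] (M : Matrix ι ι ℂ) : ℂ :=
  M.trace / (Fintype.card ι)

/-- The rank-one orthogonal projection `θ_{f,f}` onto `ℂf` (for a unit vector `f`). -/
def proj1 {ι : Type*} [Fintype ι] (f : EuclideanSpace ℂ ι) : Matrix ι ι ℂ :=
  fun i j => f i * (starRingEnd ℂ) (f j)

/-!
Write `p = θ_{f̂,f̂}` and `ω(x) = ⟨f̂, x f̂⟩ = n τ(p x)`. Trace splitting applied to `p a ∈ A` and
`b ∈ B` gives `ω(a b) = ω(a) τ(b)`; with `a = 1`, `ω = τ` on `B`. Hence `‖b f̂‖² = τ(b* b)`, so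
`b ↦ b f̂` is injective on `B`, and since `dim B = n` every vector is of the form `b f̂`. For
`a ∈ A`, the vector `a* f̂ - conj ω(a) f̂` is orthogonal to every `b f̂`, hence zero. So `f̂` is
an eigenvector of both `a` and `a*` (with conjugate eigenvalues), which means `a p = p a`.
-/

open Matrix

theorem proj1_eq_vecMulVec {n : Type*} [Fintype n] (f : EuclideanSpace ℂ n) :
    proj1 f = vecMulVec (WithLp.ofLp f) (star (WithLp.ofLp f)) :=
  rfl

theorem star_dotProduct_self_eq_one {n : Type*} [Fintype n] {f : EuclideanSpace ℂ n}
    (hf : ‖f‖ = 1) : star (WithLp.ofLp f) ⬝ᵥ WithLp.ofLp f = 1 := by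
  rw [dotProduct_comm, ← EuclideanSpace.inner_eq_star_dotProduct, inner_self_eq_norm_sq_to_K, hf]
  norm_num

theorem trace_vecMulVec_mul {R n : Type*} [CommSemiring R] [Fintype n] (u w : n → R)
    (M : Matrix n n R) : (vecMulVec u w * M).trace = w ⬝ᵥ (M *ᵥ u) := by
  rw [vecMulVec_mul, trace_vecMulVec, dotProduct_comm, dotProduct_mulVec]

theorem ntr_eq_zero_iff {n : Type*} [Fintype n] [Nonempty n] {M : Matrix n n ℂ} :
    ntr M = 0 ↔ M.trace = 0 := by
  simp [ntr, Fintype.card_ne_zero]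

theorem commute_vecMulVec_star_of_mulVec_eq_smul {R n : Type*} [CommRing R] [StarRing R]
    [Fintype n] {a : Matrix n n R} {v : n → R} {c : R} (h : a *ᵥ v = c • v)
    (hH : aᴴ *ᵥ v = star c • v) : Commute a (vecMulVec v (star v)) := by
  have hvec : star v ᵥ* a = c • star v := by
    rw [← conjTranspose_conjTranspose a, ← star_mulVec, hH, star_smul, star_star]
  rw [commute_iff_eq, mul_vecMulVec, vecMulVec_mul, h, hvec, smul_vecMulVec, vecMulVec_smul]

section TraceSplitting

variable {n : Type*} [Fintype n] [DecidableEq n] {A B : StarSubalgebra ℂ (Matrix n n ℂ)}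
  {v : n → ℂ} {a b : Matrix n n ℂ}

theorem dotProduct_mul_mulVec_of_trace_split [Nonempty n]
    (hAB : ∀ a ∈ A, ∀ b ∈ B, ntr (a * b) = ntr a * ntr b) (hp : vecMulVec v (star v) ∈ A)
    (ha : a ∈ A) (hb : b ∈ B) : star v ⬝ᵥ ((a * b) *ᵥ v) = star v ⬝ᵥ (a *ᵥ v) * ntr b := by
  have hn : (Fintype.card n : ℂ) ≠ 0 := Nat.cast_ne_zero.2 Fintype.card_ne_zero
  have h := hAB _ (mul_mem hp ha) b hb
  rwa [mul_assoc, ntr, ntr, trace_vecMulVec_mul, trace_vecMulVec_mul, div_mul_eq_mul_div,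
    div_left_inj' hn] at h

theorem dotProduct_mulVec_eq_ntr [Nonempty n]
    (hAB : ∀ a ∈ A, ∀ b ∈ B, ntr (a * b) = ntr a * ntr b) (hv : star v ⬝ᵥ v = 1)
    (hp : vecMulVec v (star v) ∈ A) (hb : b ∈ B) : star v ⬝ᵥ (b *ᵥ v) = ntr b := by
  simpa [hv] using dotProduct_mul_mulVec_of_trace_split hAB hp (one_mem A) hb

theorem eq_zero_of_mulVec_eq_zero [Nonempty n]
    (hAB : ∀ a ∈ A, ∀ b ∈ B, ntr (a * b) = ntr a * ntr b) (hv : star v ⬝ᵥ v = 1)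
    (hp : vecMulVec v (star v) ∈ A) (hb : b ∈ B) (h : b *ᵥ v = 0) : b = 0 := by
  have hbb := dotProduct_mulVec_eq_ntr hAB hv hp (mul_mem (star_mem hb) hb)
  rw [star_eq_conjTranspose, ← mulVec_mulVec, h, mulVec_zero, dotProduct_zero, eq_comm,
    ntr_eq_zero_iff] at hbb
  exact trace_conjTranspose_mul_self_eq_zero_iff.1 hbb

theorem exists_mulVec_eq_of_finrank_eq [Nonempty n]
    (hAB : ∀ a ∈ A, ∀ b ∈ B, ntr (a * b) = ntr a * ntr b) (hv : star v ⬝ᵥ v = 1)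
    (hp : vecMulVec v (star v) ∈ A) (hB : Module.finrank ℂ B = Fintype.card n) (w : n → ℂ) :
    ∃ b ∈ B, b *ᵥ v = w := by
  have : FiniteDimensional ℂ B := inferInstanceAs (FiniteDimensional ℂ B.toSubalgebra.toSubmodule)
  let φ : B →ₗ[ℂ] n → ℂ := ((mulVecBilin ℂ ℂ).flip v).comp B.toSubalgebra.toSubmodule.subtype
  have hinj : Function.Injective φ := (injective_iff_map_eq_zero φ).2 fun b h =>
    Subtype.ext (eq_zero_of_mulVec_eq_zero hAB hv hp b.2 h)
  obtain ⟨b, hb⟩ := (LinearMap.injective_iff_surjective_of_finrank_eq_finrank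
    (by simp [hB])).1 hinj w
  exact ⟨b, b.2, hb⟩

theorem conjTranspose_mulVec_eq_smul [Nonempty n]
    (hAB : ∀ a ∈ A, ∀ b ∈ B, ntr (a * b) = ntr a * ntr b) (hv : star v ⬝ᵥ v = 1)
    (hp : vecMulVec v (star v) ∈ A) (hcyc : ∀ w, ∃ b ∈ B, b *ᵥ v = w) (ha : a ∈ A) :
    aᴴ *ᵥ v = star (star v ⬝ᵥ (a *ᵥ v)) • v := by
  set w := aᴴ *ᵥ v - star (star v ⬝ᵥ (a *ᵥ v)) • v
  have horth : ∀ b ∈ B, star w ⬝ᵥ (b *ᵥ v) = 0 := by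
    intro b hb
    have hadj : star (aᴴ *ᵥ v) ⬝ᵥ (b *ᵥ v) = star v ⬝ᵥ (a *ᵥ v) * ntr b := by
      rw [star_mulVec, conjTranspose_conjTranspose, ← dotProduct_mulVec, mulVec_mulVec]
      exact dotProduct_mul_mulVec_of_trace_split hAB hp ha hb
    rw [star_sub, sub_dotProduct, hadj, star_smul, star_star, smul_dotProduct,
      dotProduct_mulVec_eq_ntr hAB hv hp hb, smul_eq_mul, sub_self]
  obtain ⟨b, hb, hbw⟩ := hcyc w
  have hw := horth b hb
  rw [hbw, dotProduct_star_self_eq_zero] at hw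
  exact sub_eq_zero.1 hw

theorem mulVec_eq_smul [Nonempty n]
    (hAB : ∀ a ∈ A, ∀ b ∈ B, ntr (a * b) = ntr a * ntr b) (hv : star v ⬝ᵥ v = 1)
    (hp : vecMulVec v (star v) ∈ A) (hcyc : ∀ w, ∃ b ∈ B, b *ᵥ v = w) (ha : a ∈ A) :
    a *ᵥ v = (star v ⬝ᵥ (a *ᵥ v)) • v := by
  have h := conjTranspose_mulVec_eq_smul hAB hv hp hcyc (star_mem ha)
  rw [star_eq_conjTranspose, conjTranspose_conjTranspose] at h
  rw [h, dotProduct_smul, hv, smul_eq_mul, mul_one]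

end TraceSplitting

/-- if moreover `dim B = n`, the rank-one projection `θ_{f̂,f̂}` is
central in `A`. -/
theorem proj_central_of_orthogonal_pair {ι : Type*} [Fintype ι] [DecidableEq ι] [Nonempty ι]
    (A B : StarSubalgebra ℂ (Matrix ι ι ℂ))
    (hAB : ∀ a ∈ A, ∀ b ∈ B, ntr (a * b) = ntr a * ntr b)
    (fHat : EuclideanSpace ℂ ι) (hfHat : ‖fHat‖ = 1)
    (hproj : proj1 fHat ∈ A)
    (hB : Module.finrank ℂ ↥B = Fintype.card ι) :
    ∀ a ∈ A, a * proj1 fHat = proj1 fHat * a := by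
  have hv := star_dotProduct_self_eq_one hfHat
  rw [proj1_eq_vecMulVec] at hproj ⊢
  have hcyc := exists_mulVec_eq_of_finrank_eq hAB hv hproj hB
  intro a ha
  exact commute_vecMulVec_star_of_mulVec_eq_smul (mulVec_eq_smul hAB hv hproj hcyc ha)
    (conjTranspose_mulVec_eq_smul hAB hv hproj hcyc ha)

end MU
end
end
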